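/- For all β, λ, y ∈ ℂ and every m ∈ ℕ, one has s^(+)_m(y(y+1)) = ∑_{l=0}^{m} (−1)^l · C(m,l) · (−y)_l · (1+y)_l · (β/2+l)_{m−l} · (λ−β/2+l+1)_{m−l}. (This is the terminating hypergeometric representation s^(+)_m(y(y+1)) = (β/2)_m (λ−β/2+1)_m · ₃F₂[−m, −y, 1+y; β/2, λ−β/2+1; 1] with all denominators cleared; it identifies s^(+)_m as a multiple of a dual Hahn polynomial.) -/
import Mathlib


open Finset

/-- Ascending Pochhammer symbol `(a)_k = ∏_{i=0}^{k-1} (a+i)`. -/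
noncomputable def poch (a : ℂ) (k : ℕ) : ℂ := ∏ i ∈ Finset.range k, (a + i)

/-- `R_k(y;α) = ∏_{l=1}^{k} (y - (α-l)(α-l+1))`. -/
noncomputable def Rpoly (y α : ℂ) (k : ℕ) : ℂ :=
  ∏ l ∈ Finset.range k, (y - (α - (l + 1)) * (α - (l + 1) + 1))

/-- `R^(1)_k(y) = ∑_{j=1}^{k} (β/2-k+j+1)_{2(k-j)} (y - (β/2)(β/2+1)) R_{j-1}(y;k)`. -/
noncomputable def R1 (β y : ℂ) (k : ℕ) : ℂ :=
  ∑ j ∈ Finset.Icc 1 k,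
    poch (β/2 - k + j + 1) (2*(k - j)) * (y - β/2*(β/2+1)) * Rpoly y k (j-1)

/-- `s^(-)_m(y)`. -/
noncomputable def sminus (β lam y : ℂ) (m : ℕ) : ℂ :=
  ∑ k ∈ Finset.range (m+1),
    (m.choose k : ℂ) * poch (β/2 - lam - m) (m-k) * poch (-β/2 - m - 1) (m-k) * Rpoly y 0 k

/-- `s^(+)_m(y)`. -/
noncomputable def splus (β lam y : ℂ) (m : ℕ) : ℂ :=
  ∑ k ∈ Finset.range (m+1),
    (m.choose k : ℂ) * poch (β/2 - lam - m) (m-k) * poch (-β/2 - m + 1) (m-k) * Rpoly y 0 k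

/-- Coefficients `D^(1)_k(m)`. -/
noncomputable def D1 (β lam : ℂ) (m k : ℕ) : ℂ :=
  if k = m then lam - β + 2*m
  else (m.choose k : ℂ) * poch (lam - β/2 + k + 1) (m-k) * poch (β/2 + k + 1) (m-k-1) *
    ((k:ℂ)*(lam+β+2*m) + β/2*(lam-β-2*m))

/-- `s^(1)_m(y) = ∑_{k=0}^m D^(1)_k(m) R^(1)_k(y)`. -/
noncomputable def s1 (β lam y : ℂ) (m : ℕ) : ℂ :=
  ∑ k ∈ Finset.range (m+1), D1 β lam m k * R1 β y k

lemma poch_succ (a : ℂ) (n : ℕ) : poch a (n+1) = poch a n * (a + n) :=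
  Finset.prod_range_succ _ _

lemma poch_succ' (a : ℂ) (n : ℕ) : poch a (n+1) = a * poch (a+1) n := by
  unfold poch
  rw [Finset.prod_range_succ', mul_comm]
  push_cast
  rw [add_zero]
  congr 1
  exact Finset.prod_congr rfl fun i _ => by push_cast; ring

lemma poch_reflect : ∀ (n : ℕ) (a : ℂ), poch a n = (-1)^n * poch (-a - n + 1) n := by
  intro n
  induction n with
  | zero => intro a; simp [poch]
  | succ n ih =>
    intro a
    have h1 : poch a (n+1) = a * poch (a+1) n := poch_succ' a n
    have h2 := ih (a+1)
    have harg : -(a+1) - (n:ℂ) + 1 = -a - n := by ring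
    rw [harg] at h2
    have h3 : poch (-a - ((n:ℕ)+1 : ℕ) + 1) (n+1) = poch (-a - n) n * (-a - n + n) := by
      rw [show (-a - ((n:ℕ)+1 : ℕ) + 1 : ℂ) = -a - n from by push_cast; ring, poch_succ]
    rw [h1, h2, h3, pow_succ]
    ring

lemma poch_pair (a b : ℂ) (n : ℕ) :
    poch a n * poch b n = poch (-a - n + 1) n * poch (-b - n + 1) n := by
  rw [poch_reflect n a, poch_reflect n b, mul_mul_mul_comm, ← pow_add,
    Even.neg_one_pow ⟨n, rfl⟩, one_mul]

lemma Rpoly_eval (y : ℂ) (k : ℕ) :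
    Rpoly (y*(y+1)) 0 k = (-1)^k * poch (-y) k * poch (1+y) k := by
  unfold Rpoly poch
  induction k with
  | zero => simp
  | succ n ih =>
    rw [Finset.prod_range_succ, Finset.prod_range_succ, Finset.prod_range_succ, ih]
    push_cast
    ring

/-- terminating hypergeometric (dual Hahn) representation of `s^(+)_m`. -/
theorem splus_dualHahn (β lam y : ℂ) (m : ℕ) :
    splus β lam (y*(y+1)) m =
      ∑ l ∈ Finset.range (m+1),
        (-1)^l * (m.choose l : ℂ) * poch (-y) l * poch (1+y) l *
          poch (β/2 + l) (m-l) * poch (lam - β/2 + l + 1) (m-l) := by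
  unfold splus
  apply Finset.sum_congr rfl
  intro k hk
  rw [Finset.mem_range, Nat.lt_succ_iff] at hk
  have ha : -(β/2 + (k:ℂ)) - ((m-k : ℕ):ℂ) + 1 = -β/2 - m + 1 := by
    rw [Nat.cast_sub hk]; ring
  have hb : -(lam - β/2 + (k:ℂ) + 1) - ((m-k : ℕ):ℂ) + 1 = β/2 - lam - m := by
    rw [Nat.cast_sub hk]; ring
  have hkey := poch_pair (β/2 + (k:ℂ)) (lam - β/2 + (k:ℂ) + 1) (m-k)
  rw [ha, hb] at hkey
  rw [Rpoly_eval]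
  linear_combination (-((-1:ℂ)^k * (m.choose k : ℂ) * poch (-y) k * poch (1+y) k)) * hkey
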